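/- arXiv:1302.1056 — 7 statements merged into one kernel-verified Lean document; each statement's English description precedes it below -/
import Mathlib

section
/- Let g, h : ℝⁿ → ℝ be nonnegative homogeneous polynomials of even degree d whose sublevel sets {x : g(x) ≤ 1} and {x : h(x) ≤ 1} each have finite Lebesgue measure. Then for every λ ∈ (0,1), the sublevel set {x : λ·g(x) + (1−λ)·h(x) ≤ 1} also has finite Lebesgue measure; in fact its measure is at most the sum of the measures of the two original sublevel sets. -/
open MeasureTheory MvPolynomial

theorem convex_combination_finite_sublevel_volume
    (n d : ℕ) (hd : Even d)
    (g h : MvPolynomial (Fin n) ℝ)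
    (hg : g.IsHomogeneous d) (hh : h.IsHomogeneous d)
    (hg0 : ∀ x : Fin n → ℝ, 0 ≤ eval x g)
    (hh0 : ∀ x : Fin n → ℝ, 0 ≤ eval x h)
    (hgvol : volume {x : Fin n → ℝ | eval x g ≤ 1} < ⊤)
    (hhvol : volume {x : Fin n → ℝ | eval x h ≤ 1} < ⊤)
    (l : ℝ) (hl : l ∈ Set.Ioo (0:ℝ) 1) :
    volume {x : Fin n → ℝ | l * eval x g + (1 - l) * eval x h ≤ 1}
      ≤ volume {x : Fin n → ℝ | eval x g ≤ 1} + volume {x : Fin n → ℝ | eval x h ≤ 1} ∧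
    volume {x : Fin n → ℝ | l * eval x g + (1 - l) * eval x h ≤ 1} < ⊤ := by
  obtain ⟨hl0, hl1⟩ := hl
  have hsub : {x : Fin n → ℝ | l * eval x g + (1 - l) * eval x h ≤ 1} ⊆
      {x : Fin n → ℝ | eval x g ≤ 1} ∪ {x : Fin n → ℝ | eval x h ≤ 1} := by
    intro x hx
    by_contra hc
    simp only [Set.mem_union, Set.mem_setOf_eq, not_or, not_le] at hc
    obtain ⟨h1, h2⟩ := hc
    have : (1 : ℝ) < l * eval x g + (1 - l) * eval x h := by
      nlinarith
    exact absurd hx (by simp only [Set.mem_setOf_eq]; linarith)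
  have hle := le_trans (measure_mono hsub) (measure_union_le (μ := volume) _ _)
  exact ⟨hle, lt_of_le_of_lt hle (ENNReal.add_lt_top.mpr ⟨hgvol, hhvol⟩)⟩
end

section
/- Let g : ℝⁿ → ℝ be a nonnegative, measurable, positively homogeneous function of degree d > 0 whose sublevel set G₁ = {x : g(x) ≤ 1} has finite Lebesgue measure. Then ∫_{ℝⁿ} exp(−g(x)) dx = Γ(1 + n/d) · vol(G₁), where Γ is the Gamma function. -/
/-!
Writing `exp (-g x) = ∫_{g x}^∞ exp (-s) ds` and applying Tonelli turns the integral into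
`∫_0^∞ exp (-s) vol {g ≤ s} ds`. Homogeneity gives `{g ≤ s} = s^(1/d) • {g ≤ 1}`, so
`vol {g ≤ s} = s^(n/d) vol {g ≤ 1}`, and what remains is the Gamma integral
`∫_0^∞ exp (-s) s^(n/d) ds = Γ(1 + n/d)`. Working with lower Lebesgue integrals, no
integrability has to be checked along the way.
-/

open MeasureTheory Set Real
open scoped ENNReal Pointwise

theorem lintegral_Ici_ofReal_exp_neg (a : ℝ) :
    ∫⁻ s in Ici a, ENNReal.ofReal (exp (-s)) = ENNReal.ofReal (exp (-a)) := by
  rw [← setLIntegral_congr Ioi_ae_eq_Ici, ← integral_exp_neg_Ioi a,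
    ofReal_integral_eq_lintegral_ofReal]
  · simpa using (exp_neg_integrableOn_Ioi a one_pos).integrable
  · exact .of_forall fun s => (exp_pos _).le

theorem lintegral_ofReal_exp_neg_eq_lintegral_measure_le {α : Type*} [MeasurableSpace α]
    (μ : Measure α) [SFinite μ] {g : α → ℝ} (hg : Measurable g) :
    ∫⁻ x, ENNReal.ofReal (exp (-g x)) ∂μ
      = ∫⁻ s, ENNReal.ofReal (exp (-s)) * μ {x | g x ≤ s} := by
  let F : α × ℝ → ℝ≥0∞ :=
    {p | g p.1 ≤ p.2}.indicator fun p => ENNReal.ofReal (exp (-p.2))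
  have hF : Measurable F :=
    (by fun_prop : Measurable fun p : α × ℝ => ENNReal.ofReal (exp (-p.2))).indicator
      (measurableSet_le (hg.comp measurable_fst) measurable_snd)
  calc ∫⁻ x, ENNReal.ofReal (exp (-g x)) ∂μ
      = ∫⁻ x, (∫⁻ s, F (x, s)) ∂μ := by
        refine lintegral_congr fun x => ?_
        rw [← lintegral_Ici_ofReal_exp_neg, ← lintegral_indicator measurableSet_Ici]
        rfl
    _ = ∫⁻ s, ∫⁻ x, F (x, s) ∂μ :=
        lintegral_lintegral_swap (f := fun x s => F (x, s)) hF.aemeasurable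
    _ = ∫⁻ s, ENNReal.ofReal (exp (-s)) * μ {x | g x ≤ s} :=
        lintegral_congr fun s =>
          lintegral_indicator_const (μ := μ) (hg measurableSet_Iic) (ENNReal.ofReal (exp (-s)))

theorem ofReal_Gamma_eq_lintegral {s : ℝ} (hs : 0 < s) :
    ENNReal.ofReal (Gamma s) = ∫⁻ t in Ioi 0, ENNReal.ofReal (exp (-t) * t ^ (s - 1)) := by
  rw [Gamma_eq_integral hs, ofReal_integral_eq_lintegral_ofReal (GammaIntegral_convergent hs)]
  filter_upwards [ae_restrict_mem measurableSet_Ioi] with t (ht : 0 < t)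
  positivity

section Homogeneous

variable {E : Type*} [NormedAddCommGroup E] [NormedSpace ℝ E] {g : E → ℝ} {d : ℝ}

theorem setOf_le_eq_smul_setOf_le_one (hd : 0 < d)
    (hhom : ∀ c : ℝ, 0 ≤ c → ∀ x, g (c • x) = c ^ d * g x) {s : ℝ} (hs : 0 < s) :
    {x | g x ≤ s} = s ^ d⁻¹ • {x | g x ≤ 1} := by
  ext x
  rw [mem_smul_set_iff_inv_smul_mem₀ (rpow_pos_of_pos hs _).ne', mem_ofPred_eq, mem_ofPred_eq,
    hhom _ (by positivity), inv_rpow (by positivity), ← rpow_mul hs.le, inv_mul_cancel₀ hd.ne',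
    rpow_one, inv_mul_le_iff₀ hs, mul_one]

variable [MeasurableSpace E] [BorelSpace E] [FiniteDimensional ℝ E]

theorem addHaar_setOf_le (μ : Measure E) [μ.IsAddHaarMeasure] (hd : 0 < d)
    (hhom : ∀ c : ℝ, 0 ≤ c → ∀ x, g (c • x) = c ^ d * g x) {s : ℝ} (hs : 0 < s) :
    μ {x | g x ≤ s} = ENNReal.ofReal (s ^ (Module.finrank ℝ E / d)) * μ {x | g x ≤ 1} := by
  rw [setOf_le_eq_smul_setOf_le_one hd hhom hs, Measure.addHaar_smul,
    abs_of_pos (pow_pos (rpow_pos_of_pos hs _) _), ← rpow_natCast, ← rpow_mul hs.le,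
    inv_mul_eq_div]

theorem lintegral_exp_neg_eq_gamma_mul_addHaar (μ : Measure E) [μ.IsAddHaarMeasure] (hd : 0 < d)
    (hg : Measurable g) (h0 : ∀ x, 0 ≤ g x)
    (hhom : ∀ c : ℝ, 0 ≤ c → ∀ x, g (c • x) = c ^ d * g x) :
    ∫⁻ x, ENNReal.ofReal (exp (-g x)) ∂μ
      = ENNReal.ofReal (Gamma (1 + Module.finrank ℝ E / d)) * μ {x | g x ≤ 1} := by
  have hsupp : (fun s => ENNReal.ofReal (exp (-s)) * μ {x | g x ≤ s}).support ⊆ Ici 0 := by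
    intro s hs
    by_contra hneg
    have hempty : {x | g x ≤ s} = ∅ :=
      eq_empty_of_forall_notMem fun x hx => hneg ((h0 x).trans hx)
    simp [hempty] at hs
  have hscale : EqOn (fun s => ENNReal.ofReal (exp (-s)) * μ {x | g x ≤ s})
      (fun s => ENNReal.ofReal (exp (-s) * s ^ (Module.finrank ℝ E / d)) * μ {x | g x ≤ 1})
      (Ioi 0) := fun s (hs : 0 < s) => by
    dsimp only
    rw [addHaar_setOf_le μ hd hhom hs, ← mul_assoc, ← ENNReal.ofReal_mul (exp_pos _).le]
  rw [lintegral_ofReal_exp_neg_eq_lintegral_measure_le μ hg,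
    ← setLIntegral_eq_of_support_subset hsupp, ← setLIntegral_congr Ioi_ae_eq_Ici,
    setLIntegral_congr_fun measurableSet_Ioi hscale, lintegral_mul_const _ (by fun_prop),
    ofReal_Gamma_eq_lintegral (by positivity), add_sub_cancel_left]

end Homogeneous

theorem integral_exp_neg_eq_gamma_mul_volume_general
    (n : ℕ) (d : ℝ) (hd : 0 < d)
    (g : (Fin n → ℝ) → ℝ) (hmeas : Measurable g) (h0 : ∀ x, 0 ≤ g x)
    (hhom : ∀ c : ℝ, 0 ≤ c → ∀ x, g (c • x) = c ^ d * g x) :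
    ∫ x : Fin n → ℝ, Real.exp (-(g x)) =
      Real.Gamma (1 + (n : ℝ) / d) * (volume {x : Fin n → ℝ | g x ≤ 1}).toReal := by
  rw [integral_eq_lintegral_of_nonneg_ae (.of_forall fun x => (exp_pos _).le) (by fun_prop),
    lintegral_exp_neg_eq_gamma_mul_addHaar volume hd hmeas h0 hhom, Module.finrank_fin_fun,
    ENNReal.toReal_mul, ENNReal.toReal_ofReal (Gamma_pos_of_pos (by positivity)).le]

theorem integral_exp_neg_eq_gamma_mul_volume
    (n : ℕ) (d : ℝ) (hd : 0 < d)
    (g : (Fin n → ℝ) → ℝ) (hmeas : Measurable g) (h0 : ∀ x, 0 ≤ g x)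
    (hhom : ∀ c : ℝ, 0 ≤ c → ∀ x, g (c • x) = c ^ d * g x)
    (hfin : volume {x : Fin n → ℝ | g x ≤ 1} < ⊤) :
    ∫ x : Fin n → ℝ, Real.exp (-(g x)) =
      Real.Gamma (1 + (n : ℝ) / d) * (volume {x : Fin n → ℝ | g x ≤ 1}).toReal :=
  integral_exp_neg_eq_gamma_mul_volume_general n d hd g hmeas h0 hhom
end

section
/- Let g : ℝⁿ → ℝ be a nonnegative, measurable, positively homogeneous function of degree d > 0. Then the sublevel set {x : g(x) ≤ 1} has finite Lebesgue measure if and only if ∫_{ℝⁿ} exp(−g(x)) dx < ∞. -/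
open MeasureTheory Pointwise

lemma aux_scale (n : ℕ) (d : ℝ) (hd : 0 < d)
    (g : (Fin n → ℝ) → ℝ)
    (hhom : ∀ c : ℝ, 0 ≤ c → ∀ x, g (c • x) = c ^ d * g x)
    (s : ℝ) (hs : 0 < s) :
    volume {x : Fin n → ℝ | g x ≤ s}
      = ENNReal.ofReal (s ^ ((n : ℝ) / d)) * volume {x : Fin n → ℝ | g x ≤ 1} := by
  set c : ℝ := s ^ (1 / d) with hcdef
  have hc : 0 < c := Real.rpow_pos_of_pos hs _
  have hcd : c ^ d = s := by
    rw [hcdef, ← Real.rpow_mul hs.le, one_div_mul_cancel hd.ne', Real.rpow_one]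
  have hset : {x : Fin n → ℝ | g x ≤ s} = c • {x : Fin n → ℝ | g x ≤ 1} := by
    ext x
    simp only [Set.mem_smul_set, Set.mem_setOf_eq]
    constructor
    · intro hx
      refine ⟨c⁻¹ • x, ?_, by simp [smul_smul, mul_inv_cancel₀ hc.ne']⟩
      rw [hhom c⁻¹ (by positivity) x, Real.inv_rpow hc.le, hcd, inv_mul_le_iff₀ hs]
      simpa using hx
    · rintro ⟨y, hy, rfl⟩
      rw [hhom c hc.le, hcd]
      calc s * g y ≤ s * 1 := mul_le_mul_of_nonneg_left hy hs.le
        _ = s := mul_one s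
  rw [hset, Measure.addHaar_smul, Module.finrank_fin_fun]
  congr 1
  rw [abs_of_nonneg (by positivity), hcdef, ← Real.rpow_natCast (s ^ (1/d)) n,
    ← Real.rpow_mul hs.le]
  ring_nf

lemma aux_summable (a : ℝ) :
    Summable (fun k : ℕ => Real.exp (-(k:ℝ)) * ((k:ℝ)+1) ^ a) := by
  set m : ℕ := ⌈a⌉₊ with hm
  have key : Summable (fun k : ℕ => ((k:ℝ)+1) ^ m * Real.exp (-(k:ℝ))) := by
    have h1 : Summable (fun k : ℕ => (k:ℝ) ^ m * Real.exp (-1 * (k:ℝ))) :=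
      Real.summable_pow_mul_exp_neg_nat_mul m one_pos
    have h2 := ((summable_nat_add_iff 1).2 h1).mul_left (Real.exp 1)
    refine h2.congr fun k => ?_
    push_cast
    have he : Real.exp (-1 * ((k:ℝ)+1)) = Real.exp (-(k:ℝ)) * Real.exp (-1) := by
      rw [← Real.exp_add]; ring_nf
    rw [he, Real.exp_neg 1]
    have := Real.exp_pos 1
    field_simp
  refine Summable.of_nonneg_of_le (fun k => by positivity) (fun k => ?_) key
  have h1 : ((k:ℝ)+1) ^ a ≤ ((k:ℝ)+1) ^ (m:ℝ) :=
    Real.rpow_le_rpow_of_exponent_le (by linarith [Nat.cast_nonneg (α := ℝ) k])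
      (Nat.le_ceil a)
  rw [Real.rpow_natCast] at h1
  calc Real.exp (-(k:ℝ)) * ((k:ℝ)+1) ^ a ≤ Real.exp (-(k:ℝ)) * ((k:ℝ)+1) ^ m :=
        mul_le_mul_of_nonneg_left h1 (Real.exp_nonneg _)
    _ = ((k:ℝ)+1) ^ m * Real.exp (-(k:ℝ)) := mul_comm _ _

theorem finite_sublevel_volume_iff_finite_exp_integral
    (n : ℕ) (d : ℝ) (hd : 0 < d)
    (g : (Fin n → ℝ) → ℝ) (hmeas : Measurable g) (h0 : ∀ x, 0 ≤ g x)
    (hhom : ∀ c : ℝ, 0 ≤ c → ∀ x, g (c • x) = c ^ d * g x) :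
    volume {x : Fin n → ℝ | g x ≤ 1} < ⊤ ↔
      ∫⁻ x : Fin n → ℝ, ENNReal.ofReal (Real.exp (-(g x))) < ⊤ := by
  constructor
  · intro hC
    set C := volume {x : Fin n → ℝ | g x ≤ 1} with hCdef
    set a : ℝ := (n : ℝ) / d with ha
    -- pointwise bound
    have hpt : ∀ x : Fin n → ℝ, ENNReal.ofReal (Real.exp (-(g x))) ≤
        ∑' k : ℕ, ({y : Fin n → ℝ | g y < (k:ℝ)+1}).indicator
          (fun _ => ENNReal.ofReal (Real.exp (-(k:ℝ)))) x := by
      intro x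
      set m : ℕ := ⌊g x⌋₊ with hm
      have h1 : g x < (m:ℝ) + 1 := Nat.lt_floor_add_one _
      have h2 : (m:ℝ) ≤ g x := Nat.floor_le (h0 x)
      refine le_trans ?_ (ENNReal.le_tsum m)
      rw [Set.indicator_of_mem (by exact h1)]
      exact ENNReal.ofReal_le_ofReal (Real.exp_le_exp.2 (by linarith))
    have hmble : ∀ k : ℕ, MeasurableSet {y : Fin n → ℝ | g y < (k:ℝ)+1} :=
      fun k => measurableSet_lt hmeas measurable_const
    have hbound : ∫⁻ x : Fin n → ℝ, ENNReal.ofReal (Real.exp (-(g x))) ≤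
        ∑' k : ℕ, ENNReal.ofReal (Real.exp (-(k:ℝ))) * volume {y : Fin n → ℝ | g y < (k:ℝ)+1} := by
      calc ∫⁻ x : Fin n → ℝ, ENNReal.ofReal (Real.exp (-(g x)))
          ≤ ∫⁻ x : Fin n → ℝ, ∑' k : ℕ, ({y : Fin n → ℝ | g y < (k:ℝ)+1}).indicator
              (fun _ => ENNReal.ofReal (Real.exp (-(k:ℝ)))) x := lintegral_mono hpt
        _ = ∑' k : ℕ, ∫⁻ x : Fin n → ℝ, ({y : Fin n → ℝ | g y < (k:ℝ)+1}).indicator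
              (fun _ => ENNReal.ofReal (Real.exp (-(k:ℝ)))) x := by
            exact lintegral_tsum fun k =>
              ((measurable_const.indicator (hmble k)).aemeasurable)
        _ = ∑' k : ℕ, ENNReal.ofReal (Real.exp (-(k:ℝ))) * volume {y : Fin n → ℝ | g y < (k:ℝ)+1} := by
            congr 1; ext k
            rw [lintegral_indicator_const (hmble k)]
    have hterm : ∀ k : ℕ, ENNReal.ofReal (Real.exp (-(k:ℝ))) * volume {y : Fin n → ℝ | g y < (k:ℝ)+1}
        ≤ ENNReal.ofReal (Real.exp (-(k:ℝ)) * ((k:ℝ)+1) ^ a) * C := by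
      intro k
      have hsub : volume {y : Fin n → ℝ | g y < (k:ℝ)+1} ≤ ENNReal.ofReal (((k:ℝ)+1) ^ a) * C := by
        rw [← aux_scale n d hd g hhom ((k:ℝ)+1) (by positivity)]
        exact measure_mono fun y hy => show g y ≤ _ from le_of_lt hy
      calc ENNReal.ofReal (Real.exp (-(k:ℝ))) * volume {y : Fin n → ℝ | g y < (k:ℝ)+1}
          ≤ ENNReal.ofReal (Real.exp (-(k:ℝ))) * (ENNReal.ofReal (((k:ℝ)+1) ^ a) * C) :=
            mul_le_mul_right hsub _
        _ = ENNReal.ofReal (Real.exp (-(k:ℝ)) * ((k:ℝ)+1) ^ a) * C := by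
            rw [ENNReal.ofReal_mul (Real.exp_nonneg _), mul_assoc]
    have hsum : (∑' k : ℕ, ENNReal.ofReal (Real.exp (-(k:ℝ)) * ((k:ℝ)+1) ^ a)) ≠ ⊤ := by
      rw [← ENNReal.ofReal_tsum_of_nonneg (fun k => by positivity) (aux_summable a)]
      exact ENNReal.ofReal_ne_top
    calc ∫⁻ x : Fin n → ℝ, ENNReal.ofReal (Real.exp (-(g x)))
        ≤ ∑' k : ℕ, ENNReal.ofReal (Real.exp (-(k:ℝ))) * volume {y : Fin n → ℝ | g y < (k:ℝ)+1} :=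
          hbound
      _ ≤ ∑' k : ℕ, ENNReal.ofReal (Real.exp (-(k:ℝ)) * ((k:ℝ)+1) ^ a) * C :=
          ENNReal.tsum_le_tsum hterm
      _ = (∑' k : ℕ, ENNReal.ofReal (Real.exp (-(k:ℝ)) * ((k:ℝ)+1) ^ a)) * C :=
          ENNReal.tsum_mul_right
      _ < ⊤ := ENNReal.mul_lt_top (lt_top_iff_ne_top.2 hsum) hC
  · intro hI
    by_contra hC
    rw [not_lt, top_le_iff] at hC
    have hS : MeasurableSet {x : Fin n → ℝ | g x ≤ 1} := measurableSet_le hmeas measurable_const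
    have hle : ENNReal.ofReal (Real.exp (-1)) * volume {x : Fin n → ℝ | g x ≤ 1}
        ≤ ∫⁻ x : Fin n → ℝ, ENNReal.ofReal (Real.exp (-(g x))) := by
      rw [← setLIntegral_const {x : Fin n → ℝ | g x ≤ 1} _]
      refine le_trans (setLIntegral_mono (hmeas.neg.exp.ennreal_ofReal) fun x hx => ?_)
        (setLIntegral_le_lintegral _ _)
      exact ENNReal.ofReal_le_ofReal (Real.exp_le_exp.2 (neg_le_neg (show g x ≤ 1 from hx)))
    rw [hC, ENNReal.mul_top (by simp [Real.exp_pos])] at hle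
    exact (lt_irrefl ⊤ (lt_of_le_of_lt hle hI))
end

section
/- Let g be a nonnegative homogeneous polynomial of degree d > 0 in n variables with ∫_{ℝⁿ} exp(−g) dx < ∞. Then ∫_{ℝⁿ} g(x) · exp(−g(x)) dx = (n/d) · ∫_{ℝⁿ} exp(−g(x)) dx. -/
/-!
For `f ≥ 0` positively homogeneous of degree `r` on an `n`-dimensional space, the substitution
`x ↦ t ^ (1 / r) • x` shows `I(t) := ∫ exp (-(t * f)) = t ^ (-(n / r)) * I(1)` for `t > 0`.
Differentiating under the integral sign instead gives `I'(1) = -∫ f * exp (-f)`, the derivative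
being dominated near `t = 1` by a multiple of `exp (-(f / 4))`, integrable by the same scaling.
Comparing the two values of `I'(1)` is the identity.
-/

open MeasureTheory MvPolynomial Module Real Filter Topology

theorem MvPolynomial.IsHomogeneous.eval_smul {σ R : Type*} [CommSemiring R]
    {φ : MvPolynomial σ R} {n : ℕ} (hφ : φ.IsHomogeneous n) (c : R) (x : σ → R) :
    eval (c • x) φ = c ^ n * eval x φ := by
  rw [eval_eq, eval_eq, Finset.mul_sum]
  refine Finset.sum_congr rfl fun m hm => ?_
  have hdeg : ∑ i ∈ m.support, m i = n := by
    simpa [Finsupp.weight_apply, Finsupp.sum] using hφ (mem_support_iff.mp hm)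
  simp only [Pi.smul_apply, smul_eq_mul, mul_pow, Finset.prod_mul_distrib,
    Finset.prod_pow_eq_pow_sum, hdeg]
  ring

def IsPosHomogeneous {E : Type*} [SMul ℝ E] (f : E → ℝ) (r : ℝ) : Prop :=
  ∀ c : ℝ, 0 < c → ∀ x, f (c • x) = c ^ r * f x

theorem MvPolynomial.IsHomogeneous.isPosHomogeneous_eval {σ : Type*}
    {φ : MvPolynomial σ ℝ} {n : ℕ} (hφ : φ.IsHomogeneous n) :
    IsPosHomogeneous (fun x => eval x φ) n := fun c _ x => by
  simp only [Real.rpow_natCast, hφ.eval_smul]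

theorem mul_exp_neg_two_mul_le {s : ℝ} (hs : 0 < s) (u : ℝ) :
    u * exp (-(2 * s * u)) ≤ s⁻¹ * exp (-(s * u)) := by
  have hsu : s * u * exp (-(s * u)) ≤ 1 :=
    (mul_exp_neg_le_exp_neg_one _).trans (exp_le_one_iff.2 (by norm_num))
  have hexp : exp (-(2 * s * u)) = exp (-(s * u)) * exp (-(s * u)) := by
    rw [← exp_add]; ring_nf
  calc u * exp (-(2 * s * u)) = s⁻¹ * (s * u * exp (-(s * u))) * exp (-(s * u)) := by
        rw [hexp]; field_simp
    _ ≤ s⁻¹ * 1 * exp (-(s * u)) := by gcongr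
    _ = s⁻¹ * exp (-(s * u)) := by rw [mul_one]

theorem hasDerivAt_integral_exp_neg_mul {α : Type*} [MeasurableSpace α] {μ : Measure α}
    {f : α → ℝ} (hf0 : ∀ x, 0 ≤ f x) (hfm : AEStronglyMeasurable f μ)
    (hint : ∀ t, 0 < t → Integrable (fun x => exp (-(t * f x))) μ) {t₀ : ℝ} (ht₀ : 0 < t₀) :
    HasDerivAt (fun t => ∫ x, exp (-(t * f x)) ∂μ) (-∫ x, f x * exp (-(t₀ * f x)) ∂μ) t₀ := by
  have hmeas : ∀ᶠ t in 𝓝 t₀, AEStronglyMeasurable (fun x => exp (-(t * f x))) μ := by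
    filter_upwards [Ioi_mem_nhds ht₀] with t ht using (hint t ht).aestronglyMeasurable
  have hbound : ∀ x, ∀ t ∈ Set.Ioi (t₀ / 2),
      ‖-f x * exp (-(t * f x))‖ ≤ (t₀ / 4)⁻¹ * exp (-(t₀ / 4 * f x)) := fun x t ht => by
    rw [norm_mul, norm_neg, norm_of_nonneg (hf0 x), norm_of_nonneg (exp_pos _).le]
    have hrate : 2 * (t₀ / 4) ≤ t := by linarith [Set.mem_Ioi.1 ht]
    calc f x * exp (-(t * f x)) ≤ f x * exp (-(2 * (t₀ / 4) * f x)) :=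
          mul_le_mul_of_nonneg_left (exp_le_exp.2 (neg_le_neg
            (mul_le_mul_of_nonneg_right hrate (hf0 x)))) (hf0 x)
      _ ≤ _ := mul_exp_neg_two_mul_le (by positivity) _
  have hdiff : ∀ᵐ x ∂μ, ∀ t ∈ Set.Ioi (t₀ / 2),
      HasDerivAt (fun t => exp (-(t * f x))) (-f x * exp (-(t * f x))) t :=
    ae_of_all _ fun x t _ => by simpa [mul_comm] using ((hasDerivAt_mul_const (f x)).neg).exp
  simpa only [neg_mul, integral_neg] using
    (hasDerivAt_integral_of_dominated_loc_of_deriv_le (Ioi_mem_nhds (half_lt_self ht₀)) hmeas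
      (hint t₀ ht₀) (hfm.neg.mul (hint t₀ ht₀).aestronglyMeasurable) (ae_of_all _ hbound)
      ((hint _ (by positivity)).const_mul _) hdiff).2

namespace IsPosHomogeneous

theorem apply_rpow_inv_smul {E : Type*} [SMul ℝ E] {f : E → ℝ} {r t : ℝ}
    (hf : IsPosHomogeneous f r) (hr : r ≠ 0) (ht : 0 < t) (x : E) :
    f (t ^ r⁻¹ • x) = t * f x := by
  rw [hf _ (rpow_pos_of_pos ht _), ← rpow_mul ht.le, inv_mul_cancel₀ hr, rpow_one]

variable {E : Type*} [NormedAddCommGroup E] [NormedSpace ℝ E] [MeasurableSpace E] [BorelSpace E]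
  [FiniteDimensional ℝ E] {μ : Measure E} [μ.IsAddHaarMeasure] {f : E → ℝ} {r t : ℝ}

theorem integrable_comp_mul {F : Type*} [NormedAddCommGroup F] (hf : IsPosHomogeneous f r)
    (hr : r ≠ 0) (ht : 0 < t) {G : ℝ → F} (hG : Integrable (fun x => G (f x)) μ) :
    Integrable (fun x => G (t * f x)) μ := by
  simp_rw [← hf.apply_rpow_inv_smul hr ht]
  exact hG.comp_smul (rpow_pos_of_pos ht _).ne'

theorem integral_comp_mul {F : Type*} [NormedAddCommGroup F] [NormedSpace ℝ F]
    (hf : IsPosHomogeneous f r) (hr : r ≠ 0) (ht : 0 < t) (G : ℝ → F) :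
    ∫ x, G (t * f x) ∂μ = t ^ (-(finrank ℝ E / r)) • ∫ x, G (f x) ∂μ := by
  simp_rw [← hf.apply_rpow_inv_smul hr ht]
  rw [Measure.integral_comp_smul_of_nonneg μ (fun x => G (f x)) _
    (hR := (rpow_pos_of_pos ht _).le), ← rpow_natCast, ← rpow_mul ht.le,
    ← rpow_neg ht.le, div_eq_inv_mul]

theorem integral_mul_exp_neg (hf : IsPosHomogeneous f r) (hr : r ≠ 0) (hf0 : ∀ x, 0 ≤ f x)
    (hfm : AEStronglyMeasurable f μ) (hint : Integrable (fun x => exp (-f x)) μ) :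
    ∫ x, f x * exp (-f x) ∂μ = (finrank ℝ E / r) * ∫ x, exp (-f x) ∂μ := by
  set p := -(finrank ℝ E / r)
  have hscale : ∀ t, 0 < t → ∫ x, exp (-(t * f x)) ∂μ = t ^ p * ∫ x, exp (-f x) ∂μ :=
    fun t ht => hf.integral_comp_mul hr ht fun u => exp (-u)
  have hderiv_scale : HasDerivAt (fun t => ∫ x, exp (-(t * f x)) ∂μ)
      (p * ∫ x, exp (-f x) ∂μ) 1 := by
    have hpow := (hasDerivAt_rpow_const (p := p) (Or.inl one_ne_zero)).mul_const
      (∫ x, exp (-f x) ∂μ)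
    rw [one_rpow, mul_one] at hpow
    exact hpow.congr_of_eventuallyEq
      (eventually_of_mem (Ioi_mem_nhds one_pos) hscale)
  have hderiv_integral := hasDerivAt_integral_exp_neg_mul hf0 hfm
    (fun t ht => hf.integrable_comp_mul hr ht (G := fun u => exp (-u)) hint) one_pos
  simp only [one_mul] at hderiv_integral
  linarith [hderiv_integral.unique hderiv_scale]

end IsPosHomogeneous

theorem euler_identity_exp_integral
    (n d : ℕ) (hd : 0 < d)
    (g : MvPolynomial (Fin n) ℝ)
    (hg : g.IsHomogeneous d)
    (h0 : ∀ x : Fin n → ℝ, 0 ≤ eval x g)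
    (hint : Integrable (fun x : Fin n → ℝ => Real.exp (-(eval x g)))) :
    ∫ x : Fin n → ℝ, eval x g * Real.exp (-(eval x g)) =
      ((n : ℝ) / (d : ℝ)) * ∫ x : Fin n → ℝ, Real.exp (-(eval x g)) := by
  simpa only [finrank_fin_fun] using hg.isPosHomogeneous_eval.integral_mul_exp_neg
    (Nat.cast_ne_zero.2 hd.ne') h0 g.continuous_eval.aestronglyMeasurable hint
end

section
/- Let g be a nonnegative, measurable, positively homogeneous function of degree d > 0 on ℝⁿ with G₁ = {x : g(x) ≤ 1} of finite Lebesgue measure. Then for every multi-index α ∈ ℕⁿ, ∫_{ℝⁿ} x^α exp(−g(x)) dx = Γ(1 + (n + |α|)/d) · ∫_{G₁} x^α dx, where x^α = ∏ᵢ xᵢ^{αᵢ} and |α| = Σᵢ αᵢ (assuming both integrals exist). -/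
open MeasureTheory
open scoped Pointwise

theorem moments_exp_neg_eq_gamma_mul_moments_sublevel
    (n : ℕ) (d : ℝ) (hd : 0 < d)
    (g : (Fin n → ℝ) → ℝ) (hmeas : Measurable g) (h0 : ∀ x, 0 ≤ g x)
    (hhom : ∀ c : ℝ, 0 ≤ c → ∀ x, g (c • x) = c ^ d * g x)
    (hfin : volume {x : Fin n → ℝ | g x ≤ 1} < ⊤)
    (α : Fin n → ℕ)
    (h1 : Integrable (fun x : Fin n → ℝ => (∏ i, x i ^ α i) * Real.exp (-(g x))))
    (h2 : IntegrableOn (fun x : Fin n → ℝ => ∏ i, x i ^ α i) {x : Fin n → ℝ | g x ≤ 1}) :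
    ∫ x : Fin n → ℝ, (∏ i, x i ^ α i) * Real.exp (-(g x)) =
      Real.Gamma (1 + ((n : ℝ) + ∑ i, (α i : ℝ)) / d) *
        ∫ x in {x : Fin n → ℝ | g x ≤ 1}, ∏ i, x i ^ α i := by
  set P : (Fin n → ℝ) → ℝ := fun x => ∏ i, x i ^ α i with hP_def
  have hPmeas : Measurable P :=
    Finset.univ.measurable_prod fun i _ => (measurable_pi_apply i).pow_const (α i)
  set K : ℕ := ∑ i, α i with hK_def
  have hKcast : (∑ i, (α i : ℝ)) = (K : ℝ) := by push_cast [hK_def]; rfl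
  set s : ℝ := ((n : ℝ) + K) / d with hs_def
  have hs0 : 0 ≤ s := by positivity
  set C : ℝ := ∫ x in {x : Fin n → ℝ | g x ≤ 1}, P x with hC_def
  -- scaling lemma
  have scale : ∀ t : ℝ, 0 < t →
      (∫ x in {x : Fin n → ℝ | g x ≤ t}, P x) = t ^ s * C := by
    intro t ht
    set c : ℝ := t ^ d⁻¹ with hc_def
    have hc : 0 < c := Real.rpow_pos_of_pos ht _
    have hcd : c ^ d = t := by
      rw [hc_def, ← Real.rpow_mul ht.le, inv_mul_cancel₀ hd.ne', Real.rpow_one]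
    have hset : c • {x : Fin n → ℝ | g x ≤ 1} = {x : Fin n → ℝ | g x ≤ t} := by
      ext y
      rw [Set.mem_smul_set_iff_inv_smul_mem₀ hc.ne']
      simp only [Set.mem_setOf_eq]
      rw [hhom c⁻¹ (by positivity) y, Real.inv_rpow hc.le, hcd]
      rw [inv_mul_le_iff₀ ht, mul_one]
    have hPc : ∀ x : Fin n → ℝ, P (c • x) = c ^ K * P x := by
      intro x
      simp only [hP_def, Pi.smul_apply, smul_eq_mul, mul_pow, Finset.prod_mul_distrib,
        Finset.prod_pow_eq_pow_sum, hK_def]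
    have hsub := MeasureTheory.Measure.setIntegral_comp_smul_of_pos volume P
      {x : Fin n → ℝ | g x ≤ 1} hc
    rw [hset] at hsub
    have hfr : Module.finrank ℝ (Fin n → ℝ) = n := by simp
    rw [hfr] at hsub
    have : (∫ x in {x : Fin n → ℝ | g x ≤ 1}, P (c • x)) = c ^ K * C := by
      simp_rw [hPc]
      rw [integral_const_mul]
    rw [this] at hsub
    have hcn : (0:ℝ) < c ^ n := by positivity
    have : (∫ x in {x : Fin n → ℝ | g x ≤ t}, P x) = c ^ n * (c ^ K * C) := by
      rw [smul_eq_mul] at hsub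
      field_simp at hsub ⊢
      linarith [hsub]
    rw [this, ← mul_assoc, ← pow_add]
    congr 1
    rw [hc_def, ← Real.rpow_natCast (t ^ d⁻¹) (n + K), ← Real.rpow_mul ht.le, hs_def]
    push_cast
    ring_nf
  -- the layer-cake function
  set f : (Fin n → ℝ) → ℝ → ℝ :=
    fun x t => Set.indicator (Set.Ici (g x)) (fun t => P x * Real.exp (-t)) t with hf_def
  have hf_uncurry : Function.uncurry f =
      Set.indicator {p : (Fin n → ℝ) × ℝ | g p.1 ≤ p.2}
        (fun p => P p.1 * Real.exp (-p.2)) := by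
    ext p
    simp only [Function.uncurry, hf_def, Set.indicator_apply, Set.mem_Ici, Set.mem_setOf_eq]
  have hSmeas : MeasurableSet {p : (Fin n → ℝ) × ℝ | g p.1 ≤ p.2} :=
    measurableSet_le (hmeas.comp measurable_fst) measurable_snd
  have hfmeas : AEStronglyMeasurable (Function.uncurry f) (volume.prod volume) := by
    rw [hf_uncurry]
    exact (((hPmeas.comp measurable_fst).mul
      ((measurable_snd.neg).exp)).indicator hSmeas).aestronglyMeasurable
  have hexp_int : ∀ a : ℝ, IntegrableOn (fun t : ℝ => Real.exp (-t)) (Set.Ici a) := by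
    intro a
    rw [integrableOn_Ici_iff_integrableOn_Ioi]
    have := exp_neg_integrableOn_Ioi a (zero_lt_one)
    simpa using this
  have hnormint : ∀ x : Fin n → ℝ,
      (∫ t : ℝ, ‖f x t‖) = ‖P x * Real.exp (-(g x))‖ := by
    intro x
    have : (fun t : ℝ => ‖f x t‖) =
        Set.indicator (Set.Ici (g x)) (fun t => ‖P x‖ * Real.exp (-t)) := by
      ext t
      rw [hf_def]
      rw [norm_indicator_eq_indicator_norm]
      congr 1
      ext t
      simp [abs_of_pos (Real.exp_pos _)]
    rw [this, integral_indicator measurableSet_Ici, integral_Ici_eq_integral_Ioi,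
      integral_const_mul, integral_exp_neg_Ioi]
    simp [abs_of_pos (Real.exp_pos _), abs_mul]
  have hint : Integrable (Function.uncurry f) (volume.prod volume) := by
    rw [MeasureTheory.integrable_prod_iff hfmeas]
    constructor
    · refine Filter.Eventually.of_forall fun x => ?_
      rw [hf_def]
      exact ((integrable_indicator_iff measurableSet_Ici).2 ((hexp_int (g x)).const_mul (P x)))
    · apply (h1.norm).congr
      refine Filter.Eventually.of_forall fun x => ?_
      exact (hnormint x).symm
  have swap := MeasureTheory.integral_integral_swap hint
  -- LHS of swap
  have hL : (∫ x : Fin n → ℝ, ∫ t : ℝ, f x t) = ∫ x : Fin n → ℝ, P x * Real.exp (-(g x)) := by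
    congr 1
    ext x
    rw [hf_def]
    simp only
    rw [integral_indicator measurableSet_Ici, integral_Ici_eq_integral_Ioi,
      integral_const_mul, integral_exp_neg_Ioi]
  -- inner integral of RHS
  have hR1 : ∀ t : ℝ, (∫ x : Fin n → ℝ, f x t) =
      (∫ x in {x : Fin n → ℝ | g x ≤ t}, P x) * Real.exp (-t) := by
    intro t
    have : (fun x : Fin n → ℝ => f x t) =
        fun x => Set.indicator {x : Fin n → ℝ | g x ≤ t} P x * Real.exp (-t) := by
      ext x
      simp only [hf_def, Set.indicator_apply, Set.mem_Ici, Set.mem_setOf_eq]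
      split_ifs <;> simp
    rw [this, integral_mul_const, integral_indicator (measurableSet_le hmeas measurable_const)]
  have hR2 : (∫ t : ℝ, ∫ x : Fin n → ℝ, f x t) =
      ∫ t : ℝ, Set.indicator (Set.Ioi (0:ℝ)) (fun t => t ^ s * C * Real.exp (-t)) t := by
    apply integral_congr_ae
    have hnull : {t : ℝ | ¬ ((∫ x : Fin n → ℝ, f x t) =
        Set.indicator (Set.Ioi (0:ℝ)) (fun t => t ^ s * C * Real.exp (-t)) t)} ⊆ {0} := by
      intro t ht
      by_contra h
      apply ht
      rcases lt_or_gt_of_ne (fun h' : t = 0 => h h') with htneg | htpos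
      · rw [hR1 t]
        have hempty : {x : Fin n → ℝ | g x ≤ t} = ∅ := by
          ext x; simp only [Set.mem_setOf_eq, Set.mem_empty_iff_false, iff_false, not_le]
          exact lt_of_lt_of_le htneg (h0 x)
        rw [hempty, Set.indicator_of_notMem (by simpa using htneg.not_gt)]
        simp
      · rw [hR1 t, scale t htpos, Set.indicator_of_mem (Set.mem_Ioi.2 htpos)]
    rw [Filter.EventuallyEq, ae_iff]
    exact measure_mono_null hnull (measure_singleton 0)
  have hR3 : (∫ t : ℝ, Set.indicator (Set.Ioi (0:ℝ)) (fun t => t ^ s * C * Real.exp (-t)) t) =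
      Real.Gamma (1 + s) * C := by
    rw [integral_indicator measurableSet_Ioi]
    rw [Real.Gamma_eq_integral (by positivity : (0:ℝ) < 1 + s)]
    rw [add_sub_cancel_left, ← integral_mul_const]
    apply setIntegral_congr_fun measurableSet_Ioi
    intro t _
    ring
  rw [hL] at swap
  rw [swap, hR2, hR3, hKcast]
end

section
/- Let K ⊂ ℝⁿ be a compact set and d ∈ ℕ. The dual cone of C_d(K), the cone of polynomials of degree at most d nonnegative on K (identified with their coefficient vectors in ℝ^{s(d)}), equals the truncated moment cone Δ_d = {(∫_K x^α dφ)_{|α| ≤ d} : φ a finite nonnegative Borel measure on K}. -/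
/-!
Write `v x = (x^α)_α` for the vector of monomials evaluated at `x`. Integrating the pointwise
inequality `0 ≤ ⟨f, v x⟩` against a measure on `K` shows that every moment vector lies in the dual
of `C_d(K)`. Conversely, the cone generated by `v(K)` consists of moment vectors of finitely atomic
measures, and its dual is `C_d(K)`. This cone is closed: the convex hull of the compact set `v(K)`
is compact by Carathéodory and lies in the hyperplane where the constant monomial equals `1`.
A closed convex cone is its own double dual by Hahn–Banach, so the dual of `C_d(K)` is that cone.
-/

open MeasureTheory Set

theorem IsCompact.convexHull {E : Type*} [NormedAddCommGroup E] [NormedSpace ℝ E]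
    [FiniteDimensional ℝ E] {S : Set E} (hS : IsCompact S) : IsCompact (convexHull ℝ S) := by
  rcases S.eq_empty_or_nonempty with rfl | ⟨p, hp⟩
  · simp
  set m := Module.finrank ℝ E + 1
  -- Carathéodory: every point of the hull is a convex combination of `m` points of `S`.
  have hull_eq : _root_.convexHull ℝ S =
      (fun q : (Fin m → ℝ) × (Fin m → E) => ∑ i, q.1 i • q.2 i) ''
        (stdSimplex ℝ (Fin m) ×ˢ univ.pi fun _ => S) := by
    refine Subset.antisymm (fun x hx => ?_) ?_
    · obtain ⟨ι, _, z, w, hzS, hind, hw0, hw1, rfl⟩ := eq_pos_convex_span_of_mem_convexHull hx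
      obtain ⟨e⟩ : Nonempty (ι ↪ Fin m) := Function.Embedding.nonempty_of_card_le <| by
        simpa using hind.card_le_finrank_succ.trans
          (Nat.succ_le_succ (Submodule.finrank_le _))
      set w' := Function.extend e w 0
      set z' := Function.extend e z fun _ => p
      have hw'e (i : ι) : w' (e i) = w i := e.injective.extend_apply _ _ _
      have hz'e (i : ι) : z' (e i) = z i := e.injective.extend_apply _ _ _
      have hw'_zero (j) (hj : j ∉ range e) : w' j = 0 :=
        Function.extend_apply' _ _ _ (by simpa using hj)
      have hz'_eq (j) (hj : j ∉ range e) : z' j = p :=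
        Function.extend_apply' _ _ _ (by simpa using hj)
      refine ⟨(w', z'), ⟨⟨fun j => ?_, ?_⟩, fun j _ => ?_⟩, ?_⟩ <;> dsimp only
      · by_cases hj : j ∈ range e
        · obtain ⟨i, rfl⟩ := hj
          exact (hw'e i).ge.trans' (hw0 i).le
        · exact (hw'_zero j hj).ge
      · rw [← hw1]
        exact (Fintype.sum_of_injective e e.injective _ _ hw'_zero fun i => (hw'e i).symm).symm
      · by_cases hj : j ∈ range e
        · obtain ⟨i, rfl⟩ := hj
          exact (hz'e i).symm ▸ hzS (mem_range_self i)
        · exact (hz'_eq j hj).symm ▸ hp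
      · exact (Fintype.sum_of_injective e e.injective _ _
          (fun j hj => by simp only [hw'_zero j hj, zero_smul])
          fun i => by simp only [hw'e, hz'e]).symm
    · rintro _ ⟨⟨w, z⟩, ⟨⟨hw0, hw1⟩, hz⟩, rfl⟩
      exact (convex_convexHull ℝ S).sum_mem (fun i _ => hw0 i) hw1
        fun i _ => subset_convexHull ℝ S (hz i trivial)
  rw [hull_eq]
  exact ((isCompact_stdSimplex ℝ (Fin m)).prod (isCompact_univ_pi fun _ => hS)).image
    (by fun_prop)

namespace PointedCone

variable {E : Type*} [AddCommGroup E] [Module ℝ E]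

lemma mem_hull_iff_eq_smul_mem_convexHull {S : Set E} (hS : S.Nonempty) {ℓ : E →ₗ[ℝ] ℝ}
    (hℓ : ∀ s ∈ S, ℓ s = 1) {y : E} :
    y ∈ hull ℝ S ↔ 0 ≤ ℓ y ∧ ∃ w ∈ convexHull ℝ S, y = ℓ y • w := by
  refine ⟨fun hy => ?_, fun ⟨hy, w, hw, hyw⟩ => ?_⟩
  · induction hy using Submodule.span_induction with
    | mem s hs => exact ⟨by simp [hℓ s hs], s, subset_convexHull ℝ S hs, by simp [hℓ s hs]⟩
    | zero =>
      obtain ⟨s, hs⟩ := hS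
      exact ⟨by simp, s, subset_convexHull ℝ S hs, by simp⟩
    | add y₁ y₂ _ _ h₁ h₂ =>
      obtain ⟨hy₁, w₁, hw₁, e₁⟩ := h₁
      obtain ⟨hy₂, w₂, hw₂, e₂⟩ := h₂
      rw [map_add]
      refine ⟨add_nonneg hy₁ hy₂, ?_⟩
      rcases (add_nonneg hy₁ hy₂).eq_or_lt with hsum | hsum
      · have h₁ : ℓ y₁ = 0 := by linarith
        have h₂ : ℓ y₂ = 0 := by linarith
        exact ⟨w₁, hw₁, by rw [e₁, e₂, h₁, h₂]; simp⟩
      · refine ⟨_, convex_iff_div.1 (convex_convexHull ℝ S) hw₁ hw₂ hy₁ hy₂ hsum, ?_⟩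
        conv_lhs => rw [e₁, e₂]
        simp only [smul_add, smul_smul, mul_div_assoc', mul_div_cancel_left₀ _ hsum.ne']
    | smul c y _ h =>
      obtain ⟨hy, w, hw, hyw⟩ := h
      rw [← Nonneg.coe_smul, map_smul, smul_eq_mul]
      refine ⟨mul_nonneg c.2 hy, w, hw, ?_⟩
      rw [mul_smul, ← hyw]
  · rw [hyw]
    exact (hull ℝ S).smul_mem hy (convexHull_min subset_hull (hull ℝ S).convex hw)

lemma isClosed_hull [TopologicalSpace E] [ContinuousSMul ℝ E] [T2Space E] {S : Set E} (hS : IsCompact (convexHull ℝ S)) (ℓ : E →L[ℝ] ℝ)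
    (hℓ : ∀ s ∈ S, ℓ s = 1) : IsClosed (hull ℝ S : Set E) := by
  rcases S.eq_empty_or_nonempty with rfl | hne
  · simp
  have : CompactSpace (convexHull ℝ S) := isCompact_iff_compactSpace.mp hS
  have hull_eq : (hull ℝ S : Set E) = {y | 0 ≤ ℓ y} ∩
      Prod.snd '' {q : convexHull ℝ S × E | q.2 = ℓ q.2 • (q.1 : E)} := by
    ext y
    simp [mem_hull_iff_eq_smul_mem_convexHull hne (ℓ := ℓ.toLinearMap) hℓ]
  rw [hull_eq]
  exact (isClosed_le continuous_const ℓ.continuous).inter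
    (isClosedMap_snd_of_compactSpace _ (isClosed_eq continuous_snd (by fun_prop)))

lemma mem_hull_of_forall_dotProduct_nonneg {ι : Type*} [Fintype ι]
    {S : Set (ι → ℝ)} (hS : IsClosed (hull ℝ S : Set (ι → ℝ))) {y : ι → ℝ}
    (hy : ∀ f : ι → ℝ, (∀ s ∈ S, 0 ≤ f ⬝ᵥ s) → 0 ≤ y ⬝ᵥ f) : y ∈ hull ℝ S := by
  classical
  by_contra hyS
  obtain ⟨g, hg, hgy⟩ := ProperCone.hyperplane_separation_point ⟨hull ℝ S, hS⟩ hyS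
  set f : ι → ℝ := fun i => g (Pi.single i 1)
  have hg_eq (x : ι → ℝ) : g x = x ⬝ᵥ f := by
    conv_lhs => rw [pi_eq_sum_univ' x]
    simp [f, dotProduct]
  have hyf := hy f fun s hs => (hg s (subset_hull hs)).trans_eq ((hg_eq s).trans (dotProduct_comm _ _))
  rw [← hg_eq] at hyf
  exact hyf.not_gt hgy

end PointedCone

def momentCone {X ι : Type*} [MeasurableSpace X] (K : Set X) (v : X → ι → ℝ) :
    Set (ι → ℝ) :=
  {y | ∃ φ : Measure X, IsFiniteMeasure φ ∧ φ Kᶜ = 0 ∧ ∀ a, y a = ∫ x, v x a ∂φ}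

section MomentCone

variable {X : Type*} [TopologicalSpace X] [T2Space X] [MeasurableSpace X]
  [OpensMeasurableSpace X] {K : Set X}

lemma Continuous.integrable_of_measure_compl_eq_zero {E : Type*} [NormedAddCommGroup E]
    {g : X → E} (hg : Continuous g) (hK : IsCompact K) {φ : Measure X} [IsFiniteMeasure φ]
    (hφ : φ Kᶜ = 0) : Integrable g φ := by
  rw [← Measure.restrict_eq_self_of_ae_mem (ae_iff.mpr hφ)]
  exact hg.continuousOn.integrableOn_compact hK

variable {ι : Type*} {v : X → ι → ℝ}

lemma hull_subset_momentCone (hv : Continuous v) (hK : IsCompact K) :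
    (PointedCone.hull ℝ (v '' K) : Set (ι → ℝ)) ⊆ momentCone K v := by
  have hva (a : ι) : Continuous (v · a) := (continuous_apply a).comp hv
  intro y hy
  induction hy using Submodule.span_induction with
  | mem _ hy =>
    obtain ⟨x, hx, rfl⟩ := hy
    refine ⟨Measure.dirac x, inferInstance, ?_, fun a => ?_⟩
    · rw [Measure.dirac_apply' _ hK.isClosed.measurableSet.compl]
      simp [hx]
    · rw [integral_dirac' _ _ (hva a).stronglyMeasurable]
  | zero => exact ⟨0, inferInstance, rfl, fun a => by simp⟩
  | add y₁ y₂ _ _ h₁ h₂ =>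
    obtain ⟨φ₁, _, hφ₁, hy₁⟩ := h₁
    obtain ⟨φ₂, _, hφ₂, hy₂⟩ := h₂
    refine ⟨φ₁ + φ₂, inferInstance, by simp [hφ₁, hφ₂], fun a => ?_⟩
    rw [integral_add_measure ((hva a).integrable_of_measure_compl_eq_zero hK hφ₁)
      ((hva a).integrable_of_measure_compl_eq_zero hK hφ₂), Pi.add_apply, hy₁, hy₂]
  | smul c y _ h =>
    obtain ⟨φ, _, hφ, hy⟩ := h
    refine ⟨(c : ℝ).toNNReal • φ, inferInstance, by simp [hφ], fun a => ?_⟩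
    rw [integral_smul_nnreal_measure, ← Nonneg.coe_smul, Pi.smul_apply, hy, NNReal.smul_def,
      Real.coe_toNNReal _ c.2]

lemma dotProduct_nonneg_of_mem_momentCone [Fintype ι] (hv : Continuous v) (hK : IsCompact K) {y : ι → ℝ}
    (hy : y ∈ momentCone K v) {f : ι → ℝ} (hf : ∀ x ∈ K, 0 ≤ f ⬝ᵥ v x) : 0 ≤ y ⬝ᵥ f := by
  obtain ⟨φ, _, hφ, hy⟩ := hy
  have hint (a : ι) : Integrable (fun x => v x a * f a) φ :=
    (((continuous_apply a).comp hv).mul continuous_const).integrable_of_measure_compl_eq_zero hK hφ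
  calc 0 ≤ ∫ x, v x ⬝ᵥ f ∂φ :=
        integral_nonneg_of_ae <| (ae_iff.mpr hφ).mono fun x hx =>
          (hf x hx).trans_eq (dotProduct_comm _ _)
    _ = y ⬝ᵥ f := by
        simp only [dotProduct, integral_finsetSum _ fun a _ => hint a, integral_mul_const, hy]

end MomentCone

theorem dual_cone_of_nonneg_polynomials_eq_moment_cone
    (n d : ℕ) (K : Set (Fin n → ℝ)) (hK : IsCompact K)
    (C : Set ({α : Fin n → Fin (d+1) // ∑ i, (α i : ℕ) ≤ d} → ℝ))
    (hC : C = {f | ∀ x ∈ K,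
      0 ≤ ∑ a : {α : Fin n → Fin (d+1) // ∑ i, (α i : ℕ) ≤ d},
            f a * ∏ i, x i ^ ((a : Fin n → Fin (d+1)) i : ℕ)})
    (Δ : Set ({α : Fin n → Fin (d+1) // ∑ i, (α i : ℕ) ≤ d} → ℝ))
    (hΔ : Δ = {y | ∃ φ : Measure (Fin n → ℝ), IsFiniteMeasure φ ∧ φ Kᶜ = 0 ∧
      ∀ a : {α : Fin n → Fin (d+1) // ∑ i, (α i : ℕ) ≤ d},
        y a = ∫ x, ∏ i, x i ^ ((a : Fin n → Fin (d+1)) i : ℕ) ∂φ}) :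
    {y | ∀ f ∈ C, 0 ≤ ∑ a : {α : Fin n → Fin (d+1) // ∑ i, (α i : ℕ) ≤ d}, y a * f a}
      = Δ := by
  subst hC hΔ
  set v : (Fin n → ℝ) → {α : Fin n → Fin (d+1) // ∑ i, (α i : ℕ) ≤ d} → ℝ :=
    fun x a => ∏ i, x i ^ ((a : Fin n → Fin (d+1)) i : ℕ)
  have hv : Continuous v := by fun_prop
  -- the coordinate of the constant monomial is `1` on `v '' K`
  have hclosed :=
    PointedCone.isClosed_hull (hK.image hv).convexHull
      (ContinuousLinearMap.proj ⟨0, by simp⟩) (by rintro _ ⟨x, -, rfl⟩; simp [v])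
  refine Subset.antisymm (fun y hy => ?_) (fun y hy f hf => dotProduct_nonneg_of_mem_momentCone hv hK hy hf)
  exact hull_subset_momentCone hv hK <| PointedCone.mem_hull_of_forall_dotProduct_nonneg hclosed
    fun f hf => hy f fun x hx => hf _ ⟨x, hx, rfl⟩
end

section
/- Let K ⊂ ℝⁿ be compact with nonempty interior and d even. The optimization problem of minimizing ∫_{ℝⁿ} exp(−g(x)) dx over nonnegative homogeneous polynomials g of degree d with finite exponential integral and satisfying g(x) ≤ 1 for all x ∈ K, has at most one optimal solution. -/
open MeasureTheory MvPolynomial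

lemma exp_midpoint_le (a b : ℝ) :
    Real.exp (-((a + b) / 2)) ≤ (Real.exp (-a) + Real.exp (-b)) / 2 := by
  have h : Real.exp (-((a + b) / 2)) = Real.exp (-(a / 2)) * Real.exp (-(b / 2)) := by
    rw [← Real.exp_add]; ring_nf
  have h1 : Real.exp (-a) = Real.exp (-(a / 2)) * Real.exp (-(a / 2)) := by
    rw [← Real.exp_add]; ring_nf
  have h2 : Real.exp (-b) = Real.exp (-(b / 2)) * Real.exp (-(b / 2)) := by
    rw [← Real.exp_add]; ring_nf
  rw [h, h1, h2]
  nlinarith [sq_nonneg (Real.exp (-(a / 2)) - Real.exp (-(b / 2)))]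

lemma exp_midpoint_eq {a b : ℝ}
    (h : Real.exp (-((a + b) / 2)) = (Real.exp (-a) + Real.exp (-b)) / 2) : a = b := by
  have h0 : Real.exp (-((a + b) / 2)) = Real.exp (-(a / 2)) * Real.exp (-(b / 2)) := by
    rw [← Real.exp_add]; ring_nf
  have h1 : Real.exp (-a) = Real.exp (-(a / 2)) * Real.exp (-(a / 2)) := by
    rw [← Real.exp_add]; ring_nf
  have h2 : Real.exp (-b) = Real.exp (-(b / 2)) * Real.exp (-(b / 2)) := by
    rw [← Real.exp_add]; ring_nf
  rw [h0, h1, h2] at h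
  have huv : Real.exp (-(a / 2)) = Real.exp (-(b / 2)) := by
    nlinarith [sq_nonneg (Real.exp (-(a / 2)) - Real.exp (-(b / 2)))]
  have := Real.exp_eq_exp.mp huv
  linarith

theorem min_volume_problem_unique_solution
    (n d : ℕ) (hd : Even d)
    (K : Set (Fin n → ℝ)) (hK : IsCompact K) (hKi : (interior K).Nonempty)
    (g₁ g₂ : MvPolynomial (Fin n) ℝ)
    (hg₁ : g₁.IsHomogeneous d) (hg₂ : g₂.IsHomogeneous d)
    (h₁0 : ∀ x : Fin n → ℝ, 0 ≤ eval x g₁)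
    (h₂0 : ∀ x : Fin n → ℝ, 0 ≤ eval x g₂)
    (h₁K : ∀ x ∈ K, eval x g₁ ≤ 1) (h₂K : ∀ x ∈ K, eval x g₂ ≤ 1)
    (h₁int : Integrable (fun x : Fin n → ℝ => Real.exp (-(eval x g₁))))
    (h₂int : Integrable (fun x : Fin n → ℝ => Real.exp (-(eval x g₂))))
    (h₁opt : ∀ g : MvPolynomial (Fin n) ℝ, g.IsHomogeneous d →
      (∀ x : Fin n → ℝ, 0 ≤ eval x g) → (∀ x ∈ K, eval x g ≤ 1) →
      Integrable (fun x : Fin n → ℝ => Real.exp (-(eval x g))) →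
      ∫ x : Fin n → ℝ, Real.exp (-(eval x g₁)) ≤ ∫ x : Fin n → ℝ, Real.exp (-(eval x g)))
    (h₂opt : ∀ g : MvPolynomial (Fin n) ℝ, g.IsHomogeneous d →
      (∀ x : Fin n → ℝ, 0 ≤ eval x g) → (∀ x ∈ K, eval x g ≤ 1) →
      Integrable (fun x : Fin n → ℝ => Real.exp (-(eval x g))) →
      ∫ x : Fin n → ℝ, Real.exp (-(eval x g₂)) ≤ ∫ x : Fin n → ℝ, Real.exp (-(eval x g))) :
    g₁ = g₂ := by
  -- the midpoint polynomial
  set g₃ : MvPolynomial (Fin n) ℝ := C (1/2 : ℝ) * (g₁ + g₂) with hg₃def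
  have heval₃ : ∀ x : Fin n → ℝ, eval x g₃ = (eval x g₁ + eval x g₂) / 2 := by
    intro x; simp [hg₃def]; ring
  have hhom₃ : g₃.IsHomogeneous d := by
    rw [hg₃def]
    simpa using (isHomogeneous_C (Fin n) (1/2 : ℝ)).mul (hg₁.add hg₂)
  have h₃0 : ∀ x : Fin n → ℝ, 0 ≤ eval x g₃ := by
    intro x; rw [heval₃]; have := h₁0 x; have := h₂0 x; linarith
  have h₃K : ∀ x ∈ K, eval x g₃ ≤ 1 := by
    intro x hx; rw [heval₃]; have := h₁K x hx; have := h₂K x hx; linarith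
  have hbound : ∀ x : Fin n → ℝ,
      Real.exp (-(eval x g₃)) ≤ (Real.exp (-(eval x g₁)) + Real.exp (-(eval x g₂))) / 2 := by
    intro x; rw [heval₃]; exact exp_midpoint_le _ _
  have hintsum : Integrable (fun x : Fin n → ℝ =>
      (Real.exp (-(eval x g₁)) + Real.exp (-(eval x g₂))) / 2) :=
    (h₁int.add h₂int).div_const 2
  have hcont₃ : Continuous (fun x : Fin n → ℝ => Real.exp (-(eval x g₃))) :=
    Real.continuous_exp.comp (continuous_neg.comp (g₃.continuous_eval))
  have h₃int : Integrable (fun x : Fin n → ℝ => Real.exp (-(eval x g₃))) := by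
    refine hintsum.mono' hcont₃.aestronglyMeasurable ?_
    filter_upwards with x
    rw [Real.norm_eq_abs, abs_of_pos (Real.exp_pos _)]
    exact hbound x
  -- equal optimal values
  have h12 := h₁opt g₂ hg₂ h₂0 h₂K h₂int
  have h21 := h₂opt g₁ hg₁ h₁0 h₁K h₁int
  have hm : ∫ x : Fin n → ℝ, Real.exp (-(eval x g₁))
      = ∫ x : Fin n → ℝ, Real.exp (-(eval x g₂)) := le_antisymm h12 h21
  have h13 := h₁opt g₃ hhom₃ h₃0 h₃K h₃int
  have hsum : (∫ x : Fin n → ℝ, (Real.exp (-(eval x g₁)) + Real.exp (-(eval x g₂))) / 2)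
      = ∫ x : Fin n → ℝ, Real.exp (-(eval x g₁)) := by
    rw [integral_div, integral_add h₁int h₂int, ← hm]; ring
  have hle : (∫ x : Fin n → ℝ, Real.exp (-(eval x g₃)))
      ≤ ∫ x : Fin n → ℝ, (Real.exp (-(eval x g₁)) + Real.exp (-(eval x g₂))) / 2 :=
    integral_mono h₃int hintsum hbound
  have heq : (∫ x : Fin n → ℝ, Real.exp (-(eval x g₃)))
      = ∫ x : Fin n → ℝ, (Real.exp (-(eval x g₁)) + Real.exp (-(eval x g₂))) / 2 := by
    rw [hsum]; exact le_antisymm (hsum ▸ hle) h13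
  -- a.e. equality of the difference with 0
  have hdiff : (∫ x : Fin n → ℝ,
      ((Real.exp (-(eval x g₁)) + Real.exp (-(eval x g₂))) / 2 - Real.exp (-(eval x g₃)))) = 0 := by
    rw [integral_sub hintsum h₃int, heq, sub_self]
  have hdiffnn : 0 ≤ fun x : Fin n → ℝ =>
      (Real.exp (-(eval x g₁)) + Real.exp (-(eval x g₂))) / 2 - Real.exp (-(eval x g₃)) := by
    intro x; simpa using hbound x
  have hae := (integral_eq_zero_iff_of_nonneg hdiffnn (hintsum.sub h₃int)).mp hdiff
  have haeeq : (fun x : Fin n → ℝ => Real.exp (-(eval x g₃)))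
      =ᵐ[volume] (fun x : Fin n → ℝ =>
        (Real.exp (-(eval x g₁)) + Real.exp (-(eval x g₂))) / 2) := by
    filter_upwards [hae] with x hx
    have : (Real.exp (-(eval x g₁)) + Real.exp (-(eval x g₂))) / 2
        - Real.exp (-(eval x g₃)) = 0 := hx
    linarith
  have hcontsum : Continuous (fun x : Fin n → ℝ =>
      (Real.exp (-(eval x g₁)) + Real.exp (-(eval x g₂))) / 2) := by
    exact ((Real.continuous_exp.comp (continuous_neg.comp g₁.continuous_eval)).add
      (Real.continuous_exp.comp (continuous_neg.comp g₂.continuous_eval))).div_const 2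
  have hfun := (Continuous.ae_eq_iff_eq volume hcont₃ hcontsum).mp haeeq
  apply MvPolynomial.funext
  intro x
  have hx := congrFun hfun x
  rw [heval₃ x] at hx
  exact exp_midpoint_eq hx
end
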